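/- Let h ∈ ℝ⁸ with coordinates (h1,...,h8) and set Δ = h6h8 - h7². If Δ ≠ 0, then the 5×5 skew-symmetric matrix J(h) with rows/columns indexed 1..5, given by J12 = h3, J13 = h4, J14 = h6, J15 = h7, J23 = h5, J24 = h7, J25 = h8, J34 = J35 = J45 = 0 (and Jji = -Jij, Jii = 0), has rank exactly 4. -/

import Mathlib

/-! A skew-symmetric matrix of odd size has `det A = det Aᵀ = (-1)ⁿ det A = -det A`, hence is
singular, so `rank (J h) ≤ 4`. Conversely the principal minor of `J h` on the indices
`{1, 2, 4, 5}` has determinant `Δ²`, so `rank (J h) ≥ 4` when `Δ ≠ 0`. -/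

noncomputable section

open scoped Matrix

/-- The 5×5 skew-symmetric Poisson structure matrix J(h) in the variables
h1,...,h5 (h = (h1,...,h8) with 0-based indexing h i = h_{i+1}). -/
noncomputable def J (h : Fin 8 → ℝ) : Matrix (Fin 5) (Fin 5) ℝ :=
  !![0, h 2, h 3, h 5, h 6;
     -(h 2), 0, h 4, h 6, h 7;
     -(h 3), -(h 4), 0, 0, 0;
     -(h 5), -(h 6), 0, 0, 0;
     -(h 6), -(h 7), 0, 0, 0]

namespace Matrix

variable {n : Type*} [Fintype n] [DecidableEq n]

theorem det_eq_zero_of_transpose_eq_neg {R : Type*} [CommRing R] [NoZeroDivisors R]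
    (h2 : (2 : R) ≠ 0) {A : Matrix n n R} (hA : Aᵀ = -A) (hn : Odd (Fintype.card n)) :
    A.det = 0 := by
  have hneg : A.det = -A.det := by
    conv_lhs => rw [← det_transpose, hA, det_neg, hn.neg_one_pow, neg_one_mul]
  have htwice : 2 * A.det = 0 := by linear_combination hneg
  exact (mul_eq_zero.mp htwice).resolve_left h2

theorem rank_lt_card_of_det_eq_zero {K : Type*} [Field K] {A : Matrix n n K} (hA : A.det = 0) :
    A.rank < Fintype.card n := by
  refine (rank_le_card_width A).lt_of_ne fun hrank => ?_
  have hrange : LinearMap.range A.mulVecLin = ⊤ :=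
    Submodule.eq_top_of_finrank_eq (by rw [← rank, hrank, Module.finrank_fintype_fun_eq_card])
  have hunit : IsUnit A := mulVec_surjective_iff_isUnit.mp (LinearMap.range_eq_top.mp hrange)
  exact ((isUnit_iff_isUnit_det A).mp hunit).ne_zero hA

end Matrix

theorem J_transpose (h : Fin 8 → ℝ) : (J h)ᵀ = -J h := by
  ext i j
  fin_cases i <;> fin_cases j <;> simp [J]

theorem det_J_submatrix (h : Fin 8 → ℝ) :
    ((J h).submatrix ![0, 1, 3, 4] ![0, 1, 3, 4]).det = (h 5 * h 7 - h 6 ^ 2) ^ 2 := by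
  have hminor : (J h).submatrix ![0, 1, 3, 4] ![0, 1, 3, 4] =
      !![0, h 2, h 5, h 6; -(h 2), 0, h 6, h 7; -(h 5), -(h 6), 0, 0; -(h 6), -(h 7), 0, 0] := by
    ext i j
    fin_cases i <;> fin_cases j <;> rfl
  rw [hminor, Matrix.det_succ_row_zero]
  simp [Fin.sum_univ_succ, Matrix.det_fin_three, Fin.succAbove]
  ring

theorem rank_J_generic (h : Fin 8 → ℝ) (hΔ : h 5 * h 7 - (h 6)^2 ≠ 0) :
    (J h).rank = 4 := by
  have hupper : (J h).rank < 5 := by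
    simpa using Matrix.rank_lt_card_of_det_eq_zero
      (Matrix.det_eq_zero_of_transpose_eq_neg two_ne_zero (J_transpose h) (by decide))
  have hlower : 4 ≤ (J h).rank :=
    calc 4 = ((J h).submatrix ![0, 1, 3, 4] ![0, 1, 3, 4]).rank := by
          rw [Matrix.rank_of_det_ne_zero (by rw [det_J_submatrix]; exact pow_ne_zero 2 hΔ),
            Fintype.card_fin]
      _ ≤ (J h).rank := Matrix.rank_submatrix_le _ _ _
  omega

end
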